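/- arXiv:1812.07687 — 4 statements merged into one kernel-verified Lean document; each statement's English description precedes it below -/
import Mathlib

section
/- Let α ∈ ℕ^{Q_0} be q-divisible, i.e. α = mβ with m ≥ 2 and q^β = 1, θ·β = 0, and suppose α ∈ Σ_{q,θ}. Then α is anisotropic: p(α) > 1, equivalently (α,α) < 0. -/
open Finset

variable {V A : Type*} [Fintype V] [DecidableEq V] [Fintype A]

/-- Euler (Ringel) form of a quiver with arrow set `A`, tail `t`, head `h`. -/
def euler (t h : A → V) (α β : V → ℤ) : ℤ :=
  (∑ i, α i * β i) - ∑ a, α (t a) * β (h a)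

/-- Symmetrised Cartan (Tits) form. -/
def cartan (t h : A → V) (α β : V → ℤ) : ℤ :=
  euler t h α β + euler t h β α

/-- Coordinate vector at a vertex. -/
def evec (i : V) : V → ℤ := fun j => if j = i then 1 else 0

/-- A vertex is loopfree if no arrow is a loop at it. -/
def loopfree (t h : A → V) (i : V) : Prop := ∀ a : A, ¬ (t a = i ∧ h a = i)

/-- Simple reflection at a (loopfree) vertex: `s_i(α) = α - (α, e_i) e_i`. -/
def srefl (t h : A → V) (i : V) (α : V → ℤ) : V → ℤ :=
  fun j => α j - cartan t h α (evec i) * evec i j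

/-- Multiplicative pairing `q^α = ∏ i, q i ^ α i`. -/
def qpow (q : V → ℂˣ) (α : V → ℤ) : ℂˣ := ∏ i, q i ^ α i

/-- `p(α) = 1 - ⟨α,α⟩`. -/
def pfun (t h : A → V) (α : V → ℤ) : ℤ := 1 - euler t h α α

/-- Adjacency of two vertices in the underlying graph. -/
def adj (t h : A → V) (i j : V) : Prop :=
  ∃ a : A, (t a = i ∧ h a = j) ∨ (t a = j ∧ h a = i)

/-- The support of `α` is connected. -/
def connSupp (t h : A → V) (α : V → ℤ) : Prop :=
  ∀ i j, α i ≠ 0 → α j ≠ 0 →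
    Relation.ReflTransGen (fun x y => adj t h x y ∧ α x ≠ 0 ∧ α y ≠ 0) i j

/-- The fundamental region: nonzero, nonnegative, connected support,
`(α, e_i) ≤ 0` for all vertices `i`. -/
def fundRegion (t h : A → V) (α : V → ℤ) : Prop :=
  α ≠ 0 ∧ (∀ i, 0 ≤ α i) ∧ connSupp t h α ∧ ∀ i, cartan t h α (evec i) ≤ 0

/-- Roots of the quiver: obtained from coordinate vectors at loopfree vertices
(real roots) or from `±` elements of the fundamental region (imaginary roots)
by sequences of simple reflections at loopfree vertices. -/
inductive IsRoot (t h : A → V) : (V → ℤ) → Prop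
  | real (i : V) : loopfree t h i → IsRoot t h (evec i)
  | fund (α : V → ℤ) : fundRegion t h α → IsRoot t h α
  | fundNeg (α : V → ℤ) : fundRegion t h α → IsRoot t h (-α)
  | reflect (α : V → ℤ) (i : V) : loopfree t h i → IsRoot t h α →
      IsRoot t h (srefl t h i α)

/-- `N_{q,θ}`: nonnegative vectors with `q^α = 1` and `θ·α = 0`. -/
def Nqt (q : V → ℂˣ) (θ : V → ℤ) (α : V → ℤ) : Prop :=
  (∀ i, 0 ≤ α i) ∧ qpow q α = 1 ∧ (∑ i, θ i * α i) = 0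

/-- Positive roots in `N_{q,θ}`. -/
def Rplus (t h : A → V) (q : V → ℂˣ) (θ : V → ℤ) (α : V → ℤ) : Prop :=
  IsRoot t h α ∧ Nqt q θ α

/-- The set `Σ_{q,θ}`: positive roots whose `p`-value strictly exceeds the total
`p`-value of any decomposition into at least two positive roots in `R^+_{q,θ}`. -/
def InSigma (t h : A → V) (q : V → ℂˣ) (θ : V → ℤ) (α : V → ℤ) : Prop :=
  Rplus t h q θ α ∧
    ∀ L : List (V → ℤ), 2 ≤ L.length → (∀ β ∈ L, Rplus t h q θ β) →
      L.sum = α → (L.map (pfun t h)).sum < pfun t h α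

/-- Flatness: every decomposition of `α` into positive roots in `R^+_{q,θ}` has
total `p`-value at most `p(α)`. -/
def Flat (t h : A → V) (q : V → ℂˣ) (θ : V → ℤ) (α : V → ℤ) : Prop :=
  ∀ L : List (V → ℤ), (∀ β ∈ L, Rplus t h q θ β) →
    L.sum = α → (L.map (pfun t h)).sum ≤ pfun t h α

/-! Write `α = m • β` and `e = ⟨β, β⟩`. Dividing a root by `m ≥ 2` gives a root (no `e_i` is divisible,
the fundamental region is stable under positive division, and reflections are linear involutions),
so `β ∈ R⁺_{q,θ}` and `α = β + ⋯ + β` is a decomposition of `α` into `m` summands.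
Since `α ∈ Σ_{q,θ}`, `m (1 - e) = m p(β) < p(α) = 1 - m² e`, that is `(m - 1)(1 + m e) < 0`,
which forces `e < 0` and hence `⟨α, α⟩ = m² e < 0`. -/

section Forms

variable {t h : A → V}

omit [DecidableEq V]

lemma euler_smul_left (c : ℤ) (α β : V → ℤ) :
    euler t h (c • α) β = c * euler t h α β := by
  simp only [euler, Pi.smul_apply, smul_eq_mul, mul_sub, Finset.mul_sum, mul_assoc]

lemma euler_smul_right (c : ℤ) (α β : V → ℤ) :
    euler t h α (c • β) = c * euler t h α β := by
  simp only [euler, Pi.smul_apply, smul_eq_mul, mul_sub, Finset.mul_sum, mul_left_comm]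

lemma euler_sub_left (α β γ : V → ℤ) :
    euler t h (α - β) γ = euler t h α γ - euler t h β γ := by
  simp only [euler, Pi.sub_apply, sub_mul, Finset.sum_sub_distrib]
  ring

lemma euler_sub_right (α β γ : V → ℤ) :
    euler t h α (β - γ) = euler t h α β - euler t h α γ := by
  simp only [euler, Pi.sub_apply, mul_sub, Finset.sum_sub_distrib]
  ring

lemma euler_smul_smul (c : ℤ) (α : V → ℤ) :
    euler t h (c • α) (c • α) = c ^ 2 * euler t h α α := by
  rw [euler_smul_left, euler_smul_right]
  ring

lemma cartan_self (α : V → ℤ) : cartan t h α α = 2 * euler t h α α :=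
  (two_mul _).symm

lemma cartan_smul_left (c : ℤ) (α β : V → ℤ) :
    cartan t h (c • α) β = c * cartan t h α β := by
  rw [cartan, cartan, euler_smul_left, euler_smul_right, mul_add]

lemma cartan_sub_left (α β γ : V → ℤ) :
    cartan t h (α - β) γ = cartan t h α γ - cartan t h β γ := by
  rw [cartan, cartan, cartan, euler_sub_left, euler_sub_right]
  ring

lemma euler_self_neg_of_mul_pfun_lt {c : ℤ} (hc : 1 < c) {α : V → ℤ}
    (hlt : c * pfun t h α < pfun t h (c • α)) : euler t h α α < 0 := by
  rw [pfun, pfun, euler_smul_smul] at hlt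
  by_contra! hnonneg
  have : 0 < (c - 1) * (1 + c * euler t h α α) := mul_pos (by omega) (by nlinarith)
  linarith

end Forms

section Roots

variable {t h : A → V}

lemma cartan_evec_self {i : V} (hi : loopfree t h i) : cartan t h (evec i) (evec i) = 2 := by
  have hno_loop : ∑ a, evec i (t a) * evec i (h a) = 0 :=
    Finset.sum_eq_zero fun a _ => by
      have hloop := hi a
      unfold evec
      split_ifs <;> simp_all
  have heuler : euler t h (evec i) (evec i) = 1 := by
    rw [euler, hno_loop]
    simp [evec]
  rw [cartan, heuler]
  rfl

lemma srefl_eq (i : V) (α : V → ℤ) :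
    srefl t h i α = α - cartan t h α (evec i) • evec i :=
  rfl

lemma cartan_srefl_evec {i : V} (hi : loopfree t h i) (α : V → ℤ) :
    cartan t h (srefl t h i α) (evec i) = -cartan t h α (evec i) := by
  rw [srefl_eq, cartan_sub_left, cartan_smul_left, cartan_evec_self hi]
  ring

lemma srefl_srefl {i : V} (hi : loopfree t h i) (α : V → ℤ) :
    srefl t h i (srefl t h i α) = α := by
  rw [srefl_eq (α := srefl t h i α), cartan_srefl_evec hi, srefl_eq, neg_smul,
    sub_neg_eq_add, sub_add_cancel]

lemma srefl_smul (i : V) (c : ℤ) (α : V → ℤ) :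
    srefl t h i (c • α) = c • srefl t h i α := by
  rw [srefl_eq, srefl_eq, cartan_smul_left, smul_sub, mul_smul]

omit [Fintype V] [DecidableEq V] [Fintype A] in
lemma connSupp_smul_iff {c : ℤ} (hc : c ≠ 0) (α : V → ℤ) :
    connSupp t h (c • α) ↔ connSupp t h α := by
  simp [connSupp, hc]

lemma fundRegion_of_smul {c : ℤ} (hc : 0 < c) {α : V → ℤ}
    (hf : fundRegion t h (c • α)) : fundRegion t h α := by
  obtain ⟨hne, hnonneg, hconn, hcartan⟩ := hf
  refine ⟨fun h0 => hne (by rw [h0, smul_zero]), fun i => ?_,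
    (connSupp_smul_iff hc.ne' α).1 hconn, fun i => ?_⟩
  · exact nonneg_of_mul_nonneg_right (hnonneg i) hc
  · have hci := hcartan i
    rw [cartan_smul_left] at hci
    exact nonpos_of_mul_nonpos_right hci hc

omit [Fintype V] in
lemma evec_ne_smul {c : ℤ} (hc : 1 < c) (i : V) (α : V → ℤ) : evec i ≠ c • α := by
  intro heq
  have hdvd : c ∣ 1 := ⟨α i, by simpa [evec] using congrFun heq i⟩
  have := Int.eq_one_of_dvd_one (by omega) hdvd
  omega

lemma IsRoot.of_smul {c : ℤ} (hc : 1 < c) {α : V → ℤ} (hr : IsRoot t h (c • α)) :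
    IsRoot t h α := by
  suffices ∀ γ, IsRoot t h γ → ∀ α, γ = c • α → IsRoot t h α from this _ hr α rfl
  intro γ hγ
  induction hγ with
  | real i _ => exact fun α heq => absurd heq (evec_ne_smul hc i α)
  | fund γ hf =>
    rintro α rfl
    exact .fund α (fundRegion_of_smul (by omega) hf)
  | fundNeg γ hf =>
    intro α heq
    have hγ : γ = c • -α := by rw [smul_neg, ← heq, neg_neg]
    rw [← neg_neg α]
    exact .fundNeg _ (fundRegion_of_smul (by omega) (hγ ▸ hf))
  | reflect γ i hi _ ih =>
    intro α heq
    have hγ : γ = c • srefl t h i α := by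
      rw [← srefl_smul, ← heq, srefl_srefl hi]
    simpa only [srefl_srefl hi] using IsRoot.reflect _ i hi (ih _ hγ)

end Roots

/-- a `q`-divisible element of `Σ_{q,θ}` is anisotropic:
`p(α) > 1`, equivalently `(α,α) < 0`. -/
theorem qdivisible_in_sigma_anisotropic (t h : A → V) (q : V → ℂˣ)
    (θ : V → ℤ) (α β : V → ℤ) (m : ℕ) (hm : 2 ≤ m)
    (hβ : Nqt q θ β) (hαβ : α = fun i => (m : ℤ) * β i)
    (hα : InSigma t h q θ α) :
    1 < pfun t h α ∧ cartan t h α α < 0 := by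
  obtain ⟨⟨hroot, -⟩, hsplit⟩ := hα
  have hm' : (1 : ℤ) < m := by omega
  replace hαβ : α = (m : ℤ) • β := hαβ
  subst hαβ
  have hβ_root : Rplus t h q θ β := ⟨hroot.of_smul hm', hβ⟩
  have hlt := hsplit (List.replicate m β) (by simpa using hm)
    (fun γ hγ => List.eq_of_mem_replicate hγ ▸ hβ_root) (by simp [Nat.cast_smul_eq_nsmul])
  rw [List.map_replicate, List.sum_replicate, nsmul_eq_mul] at hlt
  have hneg : euler t h ((m : ℤ) • β) ((m : ℤ) • β) < 0 := by
    rw [euler_smul_smul]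
    exact mul_neg_of_pos_of_neg (by positivity) (euler_self_neg_of_mul_pfun_lt hm' hlt)
  exact ⟨by rw [pfun]; omega, by rw [cartan_self]; omega⟩
end

section
/- Let β be an anisotropic imaginary root (p(β) ≥ 2) and ν = (l_1,ν_1;…;l_k,ν_k) a weighted partition of n (so ν_1 ≥ … ≥ ν_k ≥ 1 and Σ l_i ν_i = n, l_i ≥ 1). Then the quantity d(ν) := 2(k + (p(β)−1) Σ_{i=1}^k ν_i²) satisfies d(ν) ≤ 2p(nβ) = 2(1 + n²(p(β)−1)), with equality if and only if ν = (1,n). -/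
open Finset

/-! Write `q = p(β) - 1 ≥ 1`, `T = Σ ν_i ≤ n` and `S = Σ ν_i²`. When `k ≥ 2`, every part satisfies
`ν_i + (k - 1) ≤ T`, so `S + (k - 1) T ≤ T²`; as `k - 1 < (k - 1) T`, this gives
`k + q S < 1 + q T² ≤ 1 + q n²`. When `k = 1` the claim reads `q ν_1² ≤ q (l_1 ν_1)²`, with equality
exactly when `l_1 = 1`. -/

theorem sum_sq_add_card_sub_one_mul_sum_le_sq_sum {ι : Type*} [DecidableEq ι]
    (s : Finset ι) (f : ι → ℕ) (hf : ∀ i ∈ s, 1 ≤ f i) :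
    ∑ i ∈ s, f i ^ 2 + (#s - 1) * ∑ i ∈ s, f i ≤ (∑ i ∈ s, f i) ^ 2 := by
  have hle : ∀ i ∈ s, f i + (#s - 1) ≤ ∑ j ∈ s, f j := by
    intro i hi
    have hrest : #(s.erase i) ≤ ∑ j ∈ s.erase i, f j := by
      simpa using card_nsmul_le_sum (s.erase i) f 1 fun j hj => hf j (mem_of_mem_erase hj)
    rw [card_erase_of_mem hi] at hrest
    rw [← add_sum_erase s f hi]
    omega
  calc ∑ i ∈ s, f i ^ 2 + (#s - 1) * ∑ i ∈ s, f i
      = ∑ i ∈ s, f i * (f i + (#s - 1)) := by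
        rw [mul_sum, ← sum_add_distrib]
        exact sum_congr rfl fun i _ => by ring
    _ ≤ ∑ i ∈ s, f i * ∑ j ∈ s, f j := sum_le_sum fun i hi => Nat.mul_le_mul_left _ (hle i hi)
    _ = (∑ i ∈ s, f i) ^ 2 := by rw [← sum_mul, sq]

theorem card_add_mul_sum_sq_lt {ι : Type*} [DecidableEq ι]
    (s : Finset ι) (f : ι → ℕ) {q : ℕ} (hq : 1 ≤ q) (hs : 2 ≤ #s) (hf : ∀ i ∈ s, 1 ≤ f i) :
    #s + q * ∑ i ∈ s, f i ^ 2 < 1 + q * (∑ i ∈ s, f i) ^ 2 := by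
  set T := ∑ i ∈ s, f i
  set S := ∑ i ∈ s, f i ^ 2
  have hT : #s ≤ T := by simpa using card_nsmul_le_sum s f 1 hf
  have hm : #s - 1 < (#s - 1) * T := lt_mul_of_one_lt_right (by omega) (by omega)
  have hqm : (#s - 1) * T ≤ q * ((#s - 1) * T) := Nat.le_mul_of_pos_left _ hq
  calc #s + q * S
      < 1 + (q * S + q * ((#s - 1) * T)) := by omega
    _ = 1 + q * (S + (#s - 1) * T) := by rw [mul_add]
    _ ≤ 1 + q * T ^ 2 := by grw [sum_sq_add_card_sub_one_mul_sum_le_sq_sum s f hf]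

theorem stratum_dim_le_general (p n k : ℕ) (hp : 2 ≤ p) (l ν : Fin k → ℕ)
    (hl : ∀ i, 1 ≤ l i) (hν : ∀ i, 1 ≤ ν i)
    (hsum : ∑ i, l i * ν i = n) :
    2 * (k + (p - 1) * ∑ i, (ν i) ^ 2) ≤ 2 * (1 + n ^ 2 * (p - 1)) ∧
    (2 * (k + (p - 1) * ∑ i, (ν i) ^ 2) = 2 * (1 + n ^ 2 * (p - 1)) ↔
      (k = 1 ∧ (∀ i, l i = 1) ∧ (∀ i, ν i = n))) := by
  have hq : 1 ≤ p - 1 := by omega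
  rcases lt_or_ge k 2 with hk | hk
  · interval_cases k
    · simp
    · simp only [Fin.sum_univ_one, Fin.forall_fin_one, true_and] at hsum ⊢
      subst hsum
      have hl1 : ν 0 = l 0 * ν 0 ↔ l 0 = 1 := by
        rw [eq_comm, mul_eq_right₀ (by have := hν 0; omega)]
      have hsq : ν 0 ^ 2 = (l 0 * ν 0) ^ 2 ↔ l 0 = 1 := by
        rw [sq_eq_sq₀ (by positivity) (by positivity), hl1]
      rw [hl1, and_self, mul_comm (p - 1), mul_right_inj' two_ne_zero, add_right_inj,
        mul_left_inj' (by omega), hsq]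
      exact ⟨by gcongr; exact Nat.le_mul_of_pos_left _ (hl 0), Iff.rfl⟩
  · have hT : ∑ i, ν i ≤ n := hsum ▸ sum_le_sum fun i _ => Nat.le_mul_of_pos_left _ (hl i)
    have hlt : k + (p - 1) * ∑ i, ν i ^ 2 < 1 + n ^ 2 * (p - 1) :=
      calc k + (p - 1) * ∑ i, ν i ^ 2
          < 1 + (p - 1) * (∑ i, ν i) ^ 2 := by
            simpa using card_add_mul_sum_sq_lt univ ν hq (by simpa) fun i _ => hν i
        _ ≤ 1 + n ^ 2 * (p - 1) := by rw [mul_comm]; gcongr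
    exact ⟨by omega, iff_of_false (by omega) (by rintro ⟨rfl, -⟩; omega)⟩

/-- for `p(β) = p ≥ 2` and a weighted partition
`ν = (l_1,ν_1;…;l_k,ν_k)` of `n`, the stratum dimension
`d(ν) = 2(k + (p-1) Σ ν_i²)` is at most `2 p(nβ) = 2(1 + n²(p-1))`,
with equality if and only if `ν = (1,n)`. -/
theorem stratum_dim_le (p n k : ℕ) (hp : 2 ≤ p) (l ν : Fin k → ℕ)
    (hl : ∀ i, 1 ≤ l i) (hν : ∀ i, 1 ≤ ν i)
    (hmono : ∀ i j : Fin k, i ≤ j → ν j ≤ ν i)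
    (hsum : ∑ i, l i * ν i = n) :
    2 * (k + (p - 1) * ∑ i, (ν i) ^ 2) ≤ 2 * (1 + n ^ 2 * (p - 1)) ∧
    (2 * (k + (p - 1) * ∑ i, (ν i) ^ 2) = 2 * (1 + n ^ 2 * (p - 1)) ↔
      (k = 1 ∧ (∀ i, l i = 1) ∧ (∀ i, ν i = n))) :=
  stratum_dim_le_general p n k hp l ν hl hν hsum
end

section
/- Let p ≥ 2 and n ≥ 2 with (p,n) ≠ (2,2), and let ν ≠ (1,n) be a weighted partition of n. Then 2(1 + n²(p−1)) − 2(k + (p−1)Σ_{i=1}^k ν_i²) ≥ 8, unless (p,n) = (2,3) and ν = (1,2;1,1), or (p,n) = (3,2) and ν = (1,1;1,1) (i.e. the partition 1+1 of 2 with the two parts being a single part 1 of multiplicity 2, written as two unit parts). -/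
/-!
Write `S = ∑ νᵢ²`, `m = ∑ νᵢ ≤ n` and `q = p - 1 ≥ 1`; the claim is `k + 3 + q S ≤ q n²`.
Expanding `m²`, the cross terms give `S + k(k - 1) ≤ m² ≤ n²`, which suffices once `k ≥ 3`.
For `k = 1` the partition is `l ν` with `l ≥ 2`, so `n ≥ 2ν`; for `k = 2` the cross term is
`2 ν₁ ν₂`. Both leave a handful of small cases, and only the two listed ones fail.
-/

open Finset

theorem sum_sq_add_card_sq_le_sq_sum_add_card {ι : Type*} (s : Finset ι) (f : ι → ℕ)
    (hf : ∀ i ∈ s, 1 ≤ f i) :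
    ∑ i ∈ s, f i ^ 2 + #s * #s ≤ (∑ i ∈ s, f i) ^ 2 + #s := by
  induction s using Finset.cons_induction with
  | empty => simp
  | cons a s ha ih =>
    have hfa : 1 ≤ f a := hf a (mem_cons_self a s)
    have ih := ih fun i hi => hf i (mem_cons_of_mem hi)
    have hcard : #s ≤ ∑ i ∈ s, f i := by
      simpa using card_nsmul_le_sum s f 1 fun i hi => hf i (mem_cons_of_mem hi)
    simp only [sum_cons, card_cons]
    nlinarith

theorem eq_one_of_sum_mul_eq_sum {ι : Type*} {s : Finset ι} {l ν : ι → ℕ}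
    (hl : ∀ i ∈ s, 1 ≤ l i) (hν : ∀ i ∈ s, 1 ≤ ν i)
    (h : ∑ i ∈ s, l i * ν i = ∑ i ∈ s, ν i) : ∀ i ∈ s, l i = 1 := by
  intro i hi
  have hle : ∀ j ∈ s, ν j ≤ l j * ν j := fun j hj => Nat.le_mul_of_pos_left _ (hl j hj)
  have hi' : ν i = l i * ν i := (sum_eq_sum_iff_of_le hle).1 h.symm i hi
  exact Nat.eq_of_mul_eq_mul_right (hν i hi) (by rw [one_mul]; exact hi'.symm)

theorem add_mul_le_mul_of_add_le {c S N q : ℕ} (hq : 1 ≤ q) (h : c + S ≤ N) :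
    c + q * S ≤ q * N := by
  nlinarith

theorem card_add_three_add_sum_sq_le_sq {ι : Type*} (s : Finset ι) (f : ι → ℕ) {n : ℕ}
    (hs : 3 ≤ #s) (hf : ∀ i ∈ s, 1 ≤ f i) (hn : ∑ i ∈ s, f i ≤ n) :
    #s + 3 + ∑ i ∈ s, f i ^ 2 ≤ n ^ 2 := by
  have hsq := sum_sq_add_card_sq_le_sq_sum_add_card s f hf
  have hn2 : (∑ i ∈ s, f i) ^ 2 ≤ n ^ 2 := Nat.pow_le_pow_left hn 2
  nlinarith

theorem four_add_mul_sq_le {p n a : ℕ} (hp : 2 ≤ p) (hpn : ¬(p = 2 ∧ n = 2))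
    (ha : 1 ≤ a) (han : 2 * a ≤ n) :
    4 + (p - 1) * a ^ 2 ≤ (p - 1) * n ^ 2 := by
  obtain ⟨q, rfl⟩ : ∃ q, p = q + 1 := ⟨p - 1, by omega⟩
  simp only [Nat.add_sub_cancel]
  rcases (by omega : 2 ≤ a ∨ 3 ≤ n ∨ (a = 1 ∧ n = 2)) with ha2 | hn3 | ⟨rfl, rfl⟩
  · exact add_mul_le_mul_of_add_le (by omega) (by nlinarith)
  · exact add_mul_le_mul_of_add_le (by omega) (by nlinarith)
  · omega

theorem five_add_mul_sum_sq_le {p n a b : ℕ} (hp : 2 ≤ p) (hpn : ¬(p = 2 ∧ n = 2))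
    (hb : 1 ≤ b) (hba : b ≤ a) (hn : a + b ≤ n) :
    (p = 2 ∧ n = 3 ∧ a = 2 ∧ b = 1) ∨ (p = 3 ∧ n = 2 ∧ a = 1 ∧ b = 1) ∨
      5 + (p - 1) * (a ^ 2 + b ^ 2) ≤ (p - 1) * n ^ 2 := by
  obtain ⟨q, rfl⟩ : ∃ q, p = q + 1 := ⟨p - 1, by omega⟩
  simp only [Nat.add_sub_cancel]
  by_cases hab : 3 ≤ a * b
  · exact Or.inr <| Or.inr <| add_mul_le_mul_of_add_le (by omega) (by nlinarith)
  obtain ⟨rfl, ha⟩ : b = 1 ∧ a ≤ 2 := by constructor <;> nlinarith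
  interval_cases a
  · rcases (by omega : 3 ≤ n ∨ n = 2) with hn3 | rfl
    · exact Or.inr <| Or.inr <| add_mul_le_mul_of_add_le (by omega) (by nlinarith)
    · omega
  · rcases (by omega : 4 ≤ n ∨ n = 3) with hn4 | rfl
    · exact Or.inr <| Or.inr <| add_mul_le_mul_of_add_le (by omega) (by nlinarith)
    · omega

theorem two_mul_add_eight_le_of_add_three_le {k q S N : ℕ} (h : k + 3 + q * S ≤ q * N) :
    2 * (k + q * S) + 8 ≤ 2 * (1 + N * q) := by
  linarith [mul_comm N q]

/-- for `p ≥ 2`, `n ≥ 2`, `(p,n) ≠ (2,2)` and any weighted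
partition `ν ≠ (1,n)` of `n`, the codimension is at least `8` unless
`(p,n) = (2,3)` with `ν = (1,2;1,1)` or `(p,n) = (3,2)` with
`ν = (1,1;1,1)`. -/
theorem stratum_codim_ge_eight (p n k : ℕ) (hp : 2 ≤ p) (hn : 2 ≤ n)
    (hpn : ¬(p = 2 ∧ n = 2)) (l ν : Fin k → ℕ)
    (hl : ∀ i, 1 ≤ l i) (hν : ∀ i, 1 ≤ ν i)
    (hmono : ∀ i j : Fin k, i ≤ j → ν j ≤ ν i)
    (hsum : ∑ i, l i * ν i = n)
    (hne : ¬(k = 1 ∧ (∀ i, l i = 1) ∧ (∀ i, ν i = n))) :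
    (p = 2 ∧ n = 3 ∧ k = 2 ∧ (∀ i, l i = 1) ∧
        (∃ i j : Fin k, i ≠ j ∧ ν i = 2 ∧ ν j = 1)) ∨
    (p = 3 ∧ n = 2 ∧ k = 2 ∧ (∀ i, l i = 1) ∧ (∀ i, ν i = 1)) ∨
    2 * (k + (p - 1) * ∑ i, (ν i) ^ 2) + 8 ≤ 2 * (1 + n ^ 2 * (p - 1)) := by
  have hm : ∑ i, ν i ≤ n := hsum ▸ sum_le_sum fun i _ => Nat.le_mul_of_pos_left _ (hl i)
  have hl_one (h : ∑ i, ν i = n) (i) : l i = 1 :=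
    eq_one_of_sum_mul_eq_sum (fun i _ => hl i) (fun i _ => hν i) (hsum.trans h.symm) i (mem_univ i)
  rcases (by omega : k = 0 ∨ k = 1 ∨ k = 2 ∨ 3 ≤ k) with rfl | rfl | rfl | hk
  · rw [Fin.sum_univ_zero] at hsum; omega
  · simp only [Fin.sum_univ_one] at hsum ⊢
    have hl0 : 2 ≤ l 0 := by
      by_contra! h
      have h1 : l 0 = 1 := by have := hl 0; omega
      exact hne ⟨rfl, fun i => by fin_cases i; exact h1,
        fun i => by fin_cases i; simpa [h1] using hsum⟩
    exact Or.inr <| Or.inr <| two_mul_add_eight_le_of_add_three_le <|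
      four_add_mul_sq_le hp hpn (hν 0) (hsum ▸ Nat.mul_le_mul_right _ hl0)
  · rw [Fin.sum_univ_two] at hm
    rcases five_add_mul_sum_sq_le hp hpn (hν 1) (hmono 0 1 (by decide)) hm with
      ⟨rfl, rfl, h0, h1⟩ | ⟨rfl, rfl, h0, h1⟩ | h
    · exact Or.inl ⟨rfl, rfl, rfl, hl_one (by rw [Fin.sum_univ_two]; omega), 0, 1, by decide, h0, h1⟩
    · exact Or.inr <| Or.inl ⟨rfl, rfl, rfl, hl_one (by rw [Fin.sum_univ_two]; omega),
        Fin.forall_fin_two.2 ⟨h0, h1⟩⟩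
    · exact Or.inr <| Or.inr <| by
        rw [Fin.sum_univ_two]; exact two_mul_add_eight_le_of_add_three_le h
  · refine Or.inr <| Or.inr <| two_mul_add_eight_le_of_add_three_le <|
      add_mul_le_mul_of_add_le (by omega) ?_
    simpa using card_add_three_add_sum_sq_le_sq univ ν (by simpa using hk) (fun i _ => hν i) hm
end

section
/- Let Q be a crab-shaped quiver with g ≥ 1 loops at the central vertex and k legs, and let α ∈ ℕ^{Q_0} be sincere with ⟨α,α⟩ = −1 and α in the fundamental region. Then (Q,α) is one of exactly two cases: (i) g = 2, k = 0, and α = (1) at the single vertex; or (ii) g = 1, k = 1 with leg length 1, and α = (2,1) (central dimension 2, leg dimension 1). -/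
/-!
Every leg in the fundamental region contributes at most `-(n · a₁)/2 ≤ -1` to `⟨α,α⟩`, where
`a₁` is its first dimension, since its dimensions are concave and vanish past its end. Hence
`-1 = ⟨α,α⟩ ≤ (1 - g) n² - k`. For `g ≥ 2` this forces `k = 0` and `(g - 1) n² = 1`. For `g = 1`
there is exactly one leg, contributing exactly `-1`, so `n a₁ ≤ 2`; as dimensions strictly
decrease along a leg, `n = 2`, `a₁ = 1`, and a longer leg would contribute less than `-1`.
-/

open Finset

/-- Sum of squares of the dimensions along a leg. -/
def legSq (l : List ℤ) : ℤ := (l.map (fun a => a ^ 2)).sum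

/-- Sum of products of adjacent dimensions along a leg. -/
def legAdj : List ℤ → ℤ
  | [] => 0
  | [_] => 0
  | a :: b :: rest => a * b + legAdj (b :: rest)

/-- The fundamental-region inequalities `(α, e_j) ≤ 0` along a leg with
dimensions `l`, the previous (inner) dimension being `n`
(`2 a_j ≤ a_{j-1} + a_{j+1}`, with `a_{last+1} = 0`). -/
def legFund : ℤ → List ℤ → Prop
  | _, [] => True
  | n, a :: rest => 2 * a ≤ n + rest.headI ∧ legFund a rest

/-- `⟨α,α⟩` for a crab-shaped quiver with `g` loops at the central vertex of
dimension `n`, and the given multiset of legs. -/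
def crabEuler (g : ℕ) (n : ℤ) (legs : Multiset (List ℤ)) : ℤ :=
  (1 - (g : ℤ)) * n ^ 2 +
    (legs.map (fun l => legSq l - n * l.headI - legAdj l)).sum

/-- Sincerity: all dimensions positive (and every leg nonempty). -/
def crabSincere (n : ℤ) (legs : Multiset (List ℤ)) : Prop :=
  1 ≤ n ∧ ∀ l ∈ legs, l ≠ [] ∧ ∀ a ∈ l, 1 ≤ a

/-- The fundamental-region inequalities for a crab-shaped quiver:
`(α, e_v) ≤ 0` at the central vertex and `(α, e_j) ≤ 0` along every leg. -/
def crabFund (g : ℕ) (n : ℤ) (legs : Multiset (List ℤ)) : Prop :=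
  2 * (1 - (g : ℤ)) * n ≤ (legs.map List.headI).sum ∧
    ∀ l ∈ legs, legFund n l

def legContribution (n : ℤ) (l : List ℤ) : ℤ := legSq l - n * l.headI - legAdj l

lemma crabEuler_eq (g : ℕ) (n : ℤ) (legs : Multiset (List ℤ)) :
    crabEuler g n legs = (1 - (g : ℤ)) * n ^ 2 + (legs.map (legContribution n)).sum := rfl

@[simp]
lemma legContribution_nil (n : ℤ) : legContribution n [] = 0 := by
  simp [legContribution, legSq, legAdj]

lemma legContribution_cons (n a : ℤ) (rest : List ℤ) :
    legContribution n (a :: rest) = a * (a - n) + legContribution a rest := by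
  cases rest <;> simp only [legContribution, legSq, legAdj, List.map_cons, List.sum_cons,
    List.map_nil, List.sum_nil, List.headI_cons, List.headI_nil, Int.default_eq_zero] <;> ring

lemma headI_lt_of_legFund {n : ℤ} {l : List ℤ} (hl : l ≠ []) (hpos : ∀ a ∈ l, 1 ≤ a)
    (hf : legFund n l) : l.headI < n := by
  induction l generalizing n with
  | nil => exact absurd rfl hl
  | cons a rest ih =>
    obtain ⟨ha, hrest⟩ := hf
    have ha1 : 1 ≤ a := hpos a List.mem_cons_self
    rcases rest with _ | ⟨b, r⟩
    · simp only [List.headI_cons, List.headI_nil, Int.default_eq_zero] at ha ⊢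
      omega
    · have hba : b < a := ih (List.cons_ne_nil b r)
        (fun x hx => hpos x (List.mem_cons_of_mem a hx)) hrest
      simp only [List.headI_cons] at ha hba ⊢
      omega

lemma two_mul_legContribution_le {n : ℤ} {l : List ℤ} (hpos : ∀ a ∈ l, 0 ≤ a)
    (hf : legFund n l) : 2 * legContribution n l ≤ -(n * l.headI) := by
  induction l generalizing n with
  | nil => simp
  | cons a rest ih =>
    obtain ⟨ha, hrest⟩ := hf
    have ha0 : 0 ≤ a := hpos a List.mem_cons_self
    have hrest_le := ih (fun x hx => hpos x (List.mem_cons_of_mem a hx)) hrest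
    rw [legContribution_cons, List.headI_cons]
    nlinarith

lemma legContribution_le_neg_one {n : ℤ} {l : List ℤ} (hn : 1 ≤ n) (hl : l ≠ [])
    (hpos : ∀ a ∈ l, 1 ≤ a) (hf : legFund n l) : legContribution n l ≤ -1 := by
  have h := two_mul_legContribution_le (fun a ha => (hpos a ha).trans' zero_le_one) hf
  have hhead : 1 ≤ l.headI := by
    obtain _ | ⟨a, rest⟩ := l
    · exact absurd rfl hl
    · exact hpos a List.mem_cons_self
  nlinarith

lemma legContribution_eq_neg_one {n : ℤ} {l : List ℤ} (hl : l ≠ [])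
    (hpos : ∀ a ∈ l, 1 ≤ a) (hf : legFund n l) (he : legContribution n l = -1) :
    n = 2 ∧ l = [1] := by
  obtain _ | ⟨a, rest⟩ := l
  · exact absurd rfl hl
  have ha1 : 1 ≤ a := hpos a List.mem_cons_self
  have han : a < n := headI_lt_of_legFund hl hpos hf
  have h2 := two_mul_legContribution_le (fun x hx => (hpos x hx).trans' zero_le_one) hf
  rw [he, List.headI_cons] at h2
  obtain ⟨rfl, rfl⟩ : a = 1 ∧ n = 2 := by constructor <;> nlinarith
  refine ⟨rfl, ?_⟩
  rcases rest with _ | ⟨b, r⟩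
  · rfl
  have hrest := legContribution_le_neg_one le_rfl (List.cons_ne_nil b r)
    (fun x hx => hpos x (List.mem_cons_of_mem 1 hx)) hf.2
  rw [legContribution_cons] at he
  omega

lemma Multiset.sum_map_le_neg_card {α : Type*} {s : Multiset α} {f : α → ℤ}
    (h : ∀ x ∈ s, f x ≤ -1) : (s.map f).sum ≤ -(Multiset.card s : ℤ) := by
  have := Multiset.sum_map_le_sum_map f (fun _ => (-1 : ℤ)) h
  simpa using this

/-- for a crab-shaped quiver with `g ≥ 1` loops and a sincere
dimension vector in the fundamental region with `⟨α,α⟩ = -1`, the only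
possibilities are: one vertex with two loops and dimension `1`; or one loop at
the central vertex of dimension `2` with a single leg of length `1` and
dimension `1`. -/
theorem crab_p2_classification (g : ℕ) (n : ℤ) (legs : Multiset (List ℤ))
    (hg : 1 ≤ g) (hs : crabSincere n legs) (hf : crabFund g n legs)
    (he : crabEuler g n legs = -1) :
    (g = 2 ∧ Multiset.card legs = 0 ∧ n = 1) ∨
    (g = 1 ∧ n = 2 ∧ legs = {[1]}) := by
  obtain ⟨hn, hsin⟩ := hs
  have hleg : ∀ l ∈ legs, legContribution n l ≤ -1 := fun l hl =>
    legContribution_le_neg_one hn (hsin l hl).1 (hsin l hl).2 (hf.2 l hl)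
  have hsum := Multiset.sum_map_le_neg_card hleg
  rw [crabEuler_eq] at he
  obtain rfl | hg2 : g = 1 ∨ 2 ≤ g := by omega
  · right
    obtain ⟨l, rfl⟩ : ∃ l, legs = {l} := by
      refine Multiset.card_eq_one.mp (le_antisymm ?_ (Nat.one_le_iff_ne_zero.mpr fun h0 => ?_))
      · push_cast at he; omega
      · simp [Multiset.card_eq_zero.mp h0] at he
    have hl := hsin l (Multiset.mem_singleton_self l)
    simp only [Nat.cast_one, sub_self, zero_mul, Multiset.map_singleton,
      Multiset.sum_singleton, zero_add] at he
    obtain ⟨rfl, rfl⟩ := legContribution_eq_neg_one hl.1 hl.2 (hf.2 l (by simp)) he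
    exact ⟨rfl, rfl, rfl⟩
  · left
    have hgz : (2 : ℤ) ≤ g := by exact_mod_cast hg2
    have hcentral : (1 - (g : ℤ)) * n ^ 2 ≤ -n ^ 2 := by nlinarith
    have hcard : Multiset.card legs = 0 := by
      have : 1 ≤ n ^ 2 := by nlinarith
      omega
    have hn1 : n = 1 := by nlinarith
    subst hn1
    refine ⟨?_, hcard, rfl⟩
    simp [Multiset.card_eq_zero.mp hcard] at he
    omega
end
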